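/- arXiv:1505.06417 — 2 statements merged into one kernel-verified Lean document; each statement's English description precedes it below -/
import Mathlib

section
/- The function h(u) = (2/(B(d,m)·u))·p(u)^d·(1-p(u))^m on (0,∞), where p(u) = δ/(δ + k·u²), is a probability density: ∫_0^∞ h(u) du = 1. -/
/-!
The substitution `t = p(u) = δ / (δ + k u²)` maps `(0, ∞)` decreasingly onto `(0, 1)`, and
`|p'(u)| = 2 p(u) (1 - p(u)) / u`. Hence `h(u) du = t ^ (d - 1) (1 - t) ^ (m - 1) dt / B(d, m)`,
whose integral over `(0, 1)` is `1` by Euler's beta integral.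
-/

open Real Set MeasureTheory ProbabilityTheory

namespace ProbabilityTheory

theorem intervalIntegral_rpow_mul_one_sub_rpow_eq_beta {α β : ℝ} (hα : 0 < α) (hβ : 0 < β) :
    ∫ x in (0 : ℝ)..1, x ^ (α - 1) * (1 - x) ^ (β - 1) = beta α β := by
  rw [beta_eq_betaIntegralReal α β hα hβ, Complex.betaIntegral,
    ← Complex.ofReal_re (∫ x in (0 : ℝ)..1, _), ← intervalIntegral.integral_ofReal]
  congr 1
  refine intervalIntegral.integral_congr fun x hx => ?_
  rw [uIcc_of_le zero_le_one] at hx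
  push_cast [Complex.ofReal_cpow hx.1, Complex.ofReal_cpow (sub_nonneg.2 hx.2)]
  rfl

end ProbabilityTheory

section

variable {δ k : ℝ}

theorem hasDerivAt_div_add_mul_sq {u : ℝ} (h : δ + k * u ^ 2 ≠ 0) :
    HasDerivAt (fun u => δ / (δ + k * u ^ 2)) (-(2 * δ * k * u) / (δ + k * u ^ 2) ^ 2) u := by
  have hden : HasDerivAt (fun u => δ + k * u ^ 2) (2 * k * u) u := by
    simpa [mul_comm, mul_left_comm] using ((hasDerivAt_pow 2 u).const_mul k).const_add δ
  exact ((hasDerivAt_const u δ).div hden h).congr_deriv (by ring)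

theorem strictAntiOn_div_add_mul_sq (hδ : 0 < δ) (hk : 0 < k) :
    StrictAntiOn (fun u => δ / (δ + k * u ^ 2)) (Ioi 0) := by
  intro u hu v _ huv
  have : u ^ 2 < v ^ 2 := pow_lt_pow_left₀ huv (le_of_lt hu) two_ne_zero
  exact div_lt_div_of_pos_left hδ (by positivity) (by gcongr)

theorem image_div_add_mul_sq_Ioi (hδ : 0 < δ) (hk : 0 < k) :
    (fun u => δ / (δ + k * u ^ 2)) '' Ioi 0 = Ioo 0 1 := by
  ext t
  constructor
  · rintro ⟨u, hu, rfl⟩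
    have hu2 : 0 < k * u ^ 2 := by have : (0 : ℝ) < u := hu; positivity
    exact ⟨by positivity, (div_lt_one (by positivity)).2 (by linarith)⟩
  · rintro ⟨ht0, ht1⟩
    have hq : 0 < δ * (1 - t) / (k * t) := div_pos (mul_pos hδ (by linarith)) (by positivity)
    refine ⟨√(δ * (1 - t) / (k * t)), Real.sqrt_pos.2 hq, ?_⟩
    simp only [Real.sq_sqrt hq.le]
    field_simp
    ring

theorem integral_Ioi_div_add_mul_sq_rpow (hδ : 0 < δ) (hk : 0 < k) (a b : ℝ) :
    ∫ u in Ioi 0, 2 / u * (δ / (δ + k * u ^ 2)) ^ a * (1 - δ / (δ + k * u ^ 2)) ^ b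
      = ∫ t in Ioo 0 1, t ^ (a - 1) * (1 - t) ^ (b - 1) := by
  rw [← image_div_add_mul_sq_Ioi hδ hk, integral_image_eq_integral_abs_deriv_smul measurableSet_Ioi
    (fun u _ => (hasDerivAt_div_add_mul_sq (by positivity)).hasDerivWithinAt)
    (strictAntiOn_div_add_mul_sq hδ hk).injOn]
  refine setIntegral_congr_fun measurableSet_Ioi fun u (hu : 0 < u) => ?_
  have hq : 1 - δ / (δ + k * u ^ 2) = k * u ^ 2 / (δ + k * u ^ 2) := by field_simp; ring
  set p := δ / (δ + k * u ^ 2) with hp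
  have hp0 : 0 < p := by positivity
  have hq0 : 0 < 1 - p := by rw [hq]; positivity
  have habs : |-(2 * δ * k * u) / (δ + k * u ^ 2) ^ 2| = 2 / u * p * (1 - p) := by
    rw [abs_div, abs_neg, abs_of_pos (by positivity), abs_of_pos (by positivity), hq, hp]
    field_simp
  rw [habs, smul_eq_mul, rpow_sub_one hp0.ne', rpow_sub_one hq0.ne']
  field_simp

end

theorem predictive_density_integrates_to_one (d m : ℕ) (hd : 1 ≤ d) (hm : 1 ≤ m)
    (k δ : ℝ) (hk : 0 < k) (hδ : 0 < δ) :
    ∫ u in Set.Ioi (0 : ℝ),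
        2 / ((Real.Gamma d * Real.Gamma m / Real.Gamma (d + m)) * u) *
          (δ / (δ + k * u^2)) ^ d * (1 - δ / (δ + k * u^2)) ^ m = 1 := by
  have hd' : (0 : ℝ) < d := Nat.cast_pos.2 hd
  have hm' : (0 : ℝ) < m := Nat.cast_pos.2 hm
  calc _ = ∫ u in Ioi 0, (beta d m)⁻¹ *
        (2 / u * (δ / (δ + k * u ^ 2)) ^ (d : ℝ) * (1 - δ / (δ + k * u ^ 2)) ^ (m : ℝ)) := by
        refine integral_congr_ae (ae_of_all _ fun u => ?_)
        simp only [rpow_natCast, beta]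
        ring
    _ = (beta d m)⁻¹ * ∫ t in (0 : ℝ)..1, t ^ ((d : ℝ) - 1) * (1 - t) ^ ((m : ℝ) - 1) := by
        rw [integral_const_mul, integral_Ioi_div_add_mul_sq_rpow hδ hk,
          intervalIntegral.integral_of_le zero_le_one, integral_Ioc_eq_integral_Ioo]
    _ = 1 := by
        rw [intervalIntegral_rpow_mul_one_sub_rpow_eq_beta hd' hm',
          inv_mul_cancel₀ (beta_pos hd' hm').ne']
end

section
/- Let U have density h(u) = (2/(B(d,m)·u))·p(u)^d·(1-p(u))^m on (0,∞) with p(u) = δ/(δ + k·u²), and suppose d ≥ 1, m ≥ 1. Then E[U] = (B(d - 1/2, m + 1/2)/B(d,m))·√(δ/k), provided d > 1/2. -/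
/-!
For `u > 0` the factor `u` cancels the `1 / u` in the density, so `E[U]` is `2 / B(d, m)` times
`∫₀^∞ p(u)^d (1 - p(u))^m du`. Substituting `u = √(δ/k) · √(1/x - 1)`, i.e. `x = p(u)`,
maps `(0, 1)` onto `(0, ∞)` with Jacobian
`√(δ/k) / (2 x² √(1/x - 1)) = √(δ/k) x^(-3/2) (1 - x)^(-1/2) / 2`,
which turns the integral into `√(δ/k) / 2 · B(d - 1/2, m + 1/2)`.
-/

open Real Set MeasureTheory

open ProbabilityTheory (beta)

theorem integral_Ioo_rpow_mul_one_sub_rpow {α β : ℝ} (hα : 0 < α) (hβ : 0 < β) :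
    ∫ x in Ioo (0 : ℝ) 1, x ^ (α - 1) * (1 - x) ^ (β - 1) = beta α β := by
  have hcomplex : Complex.betaIntegral α β =
      ((∫ x in (0 : ℝ)..1, x ^ (α - 1) * (1 - x) ^ (β - 1) : ℝ) : ℂ) := by
    rw [Complex.betaIntegral, ← intervalIntegral.integral_ofReal]
    refine intervalIntegral.integral_congr fun x hx => ?_
    rw [uIcc_of_le zero_le_one] at hx
    push_cast
    rw [Complex.ofReal_cpow hx.1, Complex.ofReal_cpow (sub_nonneg.2 hx.2)]
    push_cast
    ring
  rw [ProbabilityTheory.beta_eq_betaIntegralReal α β hα hβ, hcomplex, Complex.ofReal_re,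
    intervalIntegral.integral_of_le zero_le_one, integral_Ioc_eq_integral_Ioo]

section SqrtInvSubOne

variable {c : ℝ}

theorem strictAntiOn_mul_sqrt_inv_sub_one (hc : 0 < c) :
    StrictAntiOn (fun x : ℝ => c * √(x⁻¹ - 1)) (Ioo 0 1) := by
  intro x hx y hy hxy
  have hy' : 1 < y⁻¹ := (one_lt_inv₀ hy.1).2 hy.2
  have : y⁻¹ < x⁻¹ := inv_strictAnti₀ hx.1 hxy
  exact mul_lt_mul_of_pos_left (Real.sqrt_lt_sqrt (by linarith) (by linarith)) hc

theorem image_mul_sqrt_inv_sub_one (hc : 0 < c) :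
    (fun x : ℝ => c * √(x⁻¹ - 1)) '' Ioo 0 1 = Ioi 0 := by
  refine Subset.antisymm ?_ fun u (hu : 0 < u) => ?_
  · rintro _ ⟨x, hx, rfl⟩
    exact mul_pos hc (Real.sqrt_pos.2 (by linarith [(one_lt_inv₀ hx.1).2 hx.2]))
  · refine ⟨c ^ 2 / (c ^ 2 + u ^ 2), ⟨by positivity, ?_⟩, ?_⟩
    · rw [div_lt_one (by positivity)]
      nlinarith
    · have : (c ^ 2 / (c ^ 2 + u ^ 2))⁻¹ - 1 = (u / c) ^ 2 := by
        field_simp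
        ring
      simp only [this, Real.sqrt_sq (div_pos hu hc).le]
      field_simp

theorem hasDerivAt_mul_sqrt_inv_sub_one {x : ℝ} (hx : x ∈ Ioo (0 : ℝ) 1) :
    HasDerivAt (fun x : ℝ => c * √(x⁻¹ - 1)) (-(c / (2 * x ^ 2 * √(x⁻¹ - 1)))) x := by
  have hpos : 0 < x⁻¹ - 1 := by linarith [(one_lt_inv₀ hx.1).2 hx.2]
  refine ((((hasDerivAt_inv hx.1.ne').sub_const 1).sqrt hpos.ne').const_mul c).congr_deriv ?_
  ring

theorem integral_Ioi_eq_integral_Ioo_comp_mul_sqrt_inv_sub_one (hc : 0 < c) (g : ℝ → ℝ) :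
    ∫ u in Ioi 0, g u =
      ∫ x in Ioo 0 1, c / (2 * x ^ 2 * √(x⁻¹ - 1)) * g (c * √(x⁻¹ - 1)) := by
  rw [← image_mul_sqrt_inv_sub_one hc, integral_image_eq_integral_abs_deriv_smul measurableSet_Ioo
    (fun x hx => (hasDerivAt_mul_sqrt_inv_sub_one hx).hasDerivWithinAt)
    (strictAntiOn_mul_sqrt_inv_sub_one hc).injOn]
  refine setIntegral_congr_fun measurableSet_Ioo fun x hx => ?_
  rw [abs_neg, abs_of_nonneg (by positivity), smul_eq_mul]

end SqrtInvSubOne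

theorem div_add_mul_sq_sqrt_div_mul_sqrt_inv_sub_one {δ k x : ℝ} (hδ : 0 < δ) (hk : 0 < k)
    (hx : x ∈ Ioo (0 : ℝ) 1) : δ / (δ + k * (√(δ / k) * √(x⁻¹ - 1)) ^ 2) = x := by
  have hpos : 0 < x⁻¹ - 1 := by linarith [(one_lt_inv₀ hx.1).2 hx.2]
  rw [mul_pow, sq_sqrt (div_pos hδ hk).le, sq_sqrt hpos.le]
  have := hx.1.ne'
  field_simp
  ring

theorem div_sqrt_inv_sub_one_mul_rpow_mul_rpow {x : ℝ} (hx : x ∈ Ioo (0 : ℝ) 1) (a b : ℝ) :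
    1 / (2 * x ^ 2 * √(x⁻¹ - 1)) * (x ^ a * (1 - x) ^ b) =
      x ^ (a - 1 / 2 - 1) * (1 - x) ^ (b + 1 / 2 - 1) / 2 := by
  obtain ⟨hx0, hx1⟩ := hx
  have h1x : 0 < 1 - x := sub_pos.2 hx1
  have hsqrt : √(x⁻¹ - 1) = √(1 - x) / √x := by
    rw [← Real.sqrt_div h1x.le]
    congr 1
    field_simp
  rw [hsqrt, show a - 1 / 2 - 1 = a + 1 / 2 - 2 by ring, show b + 1 / 2 - 1 = b - 1 / 2 by ring,
    rpow_sub hx0, rpow_add hx0, rpow_sub h1x, ← sqrt_eq_rpow, ← sqrt_eq_rpow, rpow_two]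
  have := (Real.sqrt_pos.2 hx0).ne'
  have := (Real.sqrt_pos.2 h1x).ne'
  field_simp

theorem integral_Ioi_rpow_mul_one_sub_rpow_div_add_mul_sq {δ k a b : ℝ}
    (hδ : 0 < δ) (hk : 0 < k) (ha : 1 / 2 < a) (hb : -(1 / 2) < b) :
    ∫ u in Ioi 0, (δ / (δ + k * u ^ 2)) ^ a * (1 - δ / (δ + k * u ^ 2)) ^ b =
      √(δ / k) / 2 * beta (a - 1 / 2) (b + 1 / 2) := by
  rw [integral_Ioi_eq_integral_Ioo_comp_mul_sqrt_inv_sub_one (sqrt_pos.2 (div_pos hδ hk)),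
    ← integral_Ioo_rpow_mul_one_sub_rpow (by linarith) (by linarith), ← integral_const_mul]
  refine setIntegral_congr_fun measurableSet_Ioo fun x hx => ?_
  simp only [div_add_mul_sq_sqrt_div_mul_sqrt_inv_sub_one hδ hk hx]
  rw [div_eq_mul_one_div (√(δ / k)), mul_assoc, div_sqrt_inv_sub_one_mul_rpow_mul_rpow hx]
  ring

theorem predictive_mean_general (d m : ℕ)
    (k δ : ℝ) (hk : 0 < k) (hδ : 0 < δ) (hd2 : (1 : ℝ) / 2 < d) :
    ∫ u in Set.Ioi (0 : ℝ),
        u * (2 / ((Real.Gamma d * Real.Gamma m / Real.Gamma (d + m)) * u) *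
          (δ / (δ + k * u^2)) ^ d * (1 - δ / (δ + k * u^2)) ^ m)
      = (Real.Gamma ((d : ℝ) - 1/2) * Real.Gamma ((m : ℝ) + 1/2) /
            Real.Gamma ((d : ℝ) - 1/2 + ((m : ℝ) + 1/2))) /
          (Real.Gamma d * Real.Gamma m / Real.Gamma (d + m)) * Real.sqrt (δ / k) := by
  change ∫ u in Ioi 0,
      u * (2 / (beta d m * u) * (δ / (δ + k * u ^ 2)) ^ d * (1 - δ / (δ + k * u ^ 2)) ^ m) =
    beta (d - 1 / 2) (m + 1 / 2) / beta d m * √(δ / k)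
  have hdensity : EqOn
      (fun u => u * (2 / (beta d m * u) * (δ / (δ + k * u ^ 2)) ^ d *
        (1 - δ / (δ + k * u ^ 2)) ^ m))
      (fun u => 2 / beta d m *
        ((δ / (δ + k * u ^ 2)) ^ (d : ℝ) * (1 - δ / (δ + k * u ^ 2)) ^ (m : ℝ)))
      (Ioi 0) := fun u (hu : 0 < u) => by
    simp only [rpow_natCast]
    field_simp
  rw [setIntegral_congr_fun measurableSet_Ioi hdensity, integral_const_mul,
    integral_Ioi_rpow_mul_one_sub_rpow_div_add_mul_sq hδ hk hd2
      (by linarith [m.cast_nonneg (α := ℝ)])]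
  ring

theorem predictive_mean (d m : ℕ) (hd : 1 ≤ d) (hm : 1 ≤ m)
    (k δ : ℝ) (hk : 0 < k) (hδ : 0 < δ) (hd2 : (1 : ℝ) / 2 < d) :
    ∫ u in Set.Ioi (0 : ℝ),
        u * (2 / ((Real.Gamma d * Real.Gamma m / Real.Gamma (d + m)) * u) *
          (δ / (δ + k * u^2)) ^ d * (1 - δ / (δ + k * u^2)) ^ m)
      = (Real.Gamma ((d : ℝ) - 1/2) * Real.Gamma ((m : ℝ) + 1/2) /
            Real.Gamma ((d : ℝ) - 1/2 + ((m : ℝ) + 1/2))) /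
          (Real.Gamma d * Real.Gamma m / Real.Gamma (d + m)) * Real.sqrt (δ / k) :=
  predictive_mean_general d m k δ hk hδ hd2
end
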